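/- Consider generalised scale-free percolation SFP on ℤ^d with vertex-weight distribution W ≥ 1 and a connection function h satisfying the edge-connection bounds with long-range parameter α ∈ (0,1]. Let [c,d] be an interval with P(W ∈ [c,d]) > 0. Then almost surely every vertex of ℤ^d has infinitely many neighbours in the graph whose weight lies in [c,d]. -/

import Mathlib

open MeasureTheory ProbabilityTheory Filter Set
open scoped ENNReal NNReal

noncomputable section

namespace SFP

/-- Euclidean norm on `ℝ^d` (realised as `Fin d → ℝ`). -/
def rnorm {d : ℕ} (x : Fin d → ℝ) : ℝ := Real.sqrt (∑ i, x i ^ 2)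

/-- Euclidean norm of an integer vector in `ℤ^d`. -/
def znorm {d : ℕ} (x : Fin d → ℤ) : ℝ := rnorm fun i => (x i : ℝ)

/-- A function varies slowly at infinity. -/
def SlowlyVarying (l : ℝ → ℝ) : Prop :=
  ∀ c : ℝ, 0 < c → Tendsto (fun x => l (c * x) / l x) atTop (nhds 1)

/-- `l(w) = exp (-c₂ (log w)^γ)`. -/
def lfun (c₂ γ w : ℝ) : ℝ := Real.exp (-c₂ * Real.log w ^ γ)

/-- Edge-connection bounds, with explicit constants, for long-range parameter `α ∈ (0,∞]`. -/
def EdgeBoundsC {d : ℕ} (h : (Fin d → ℝ) → ℝ → ℝ → ℝ) (α : ℝ≥0∞)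
    (γ cl cu cl1 cu1 c₂ : ℝ) : Prop :=
  γ ∈ Set.Ioo (0 : ℝ) 1 ∧ 0 < cl ∧ 0 < cu ∧ 0 < cl1 ∧ 0 < cu1 ∧ 0 < c₂ ∧
    ((α ≠ ⊤ ∧ ∀ x : Fin d → ℝ, x ≠ 0 → ∀ w₁ w₂ : ℝ, 1 ≤ w₁ → 1 ≤ w₂ →
        cl * min (lfun c₂ γ w₁ * lfun c₂ γ w₂)
            ((w₁ * w₂ / rnorm x ^ d) ^ α.toReal) ≤ h x w₁ w₂ ∧
          h x w₁ w₂ ≤ cu * min 1 ((w₁ * w₂ / rnorm x ^ d) ^ α.toReal)) ∨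
      (α = ⊤ ∧ ∀ x : Fin d → ℝ, x ≠ 0 → ∀ w₁ w₂ : ℝ, 1 ≤ w₁ → 1 ≤ w₂ →
        cl * min (lfun c₂ γ w₁ * lfun c₂ γ w₂)
            (if rnorm x ^ d ≤ cl1 * (w₁ * w₂) then 1 else 0) ≤ h x w₁ w₂ ∧
          h x w₁ w₂ ≤ cu * (if rnorm x ^ d ≤ cu1 * (w₁ * w₂) then 1 else 0)))

/-- Edge-connection bounds with long-range parameter `α ∈ (0,∞]`. -/
def EdgeBounds {d : ℕ} (h : (Fin d → ℝ) → ℝ → ℝ → ℝ) (α : ℝ≥0∞) : Prop :=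
  ∃ γ cl cu cl1 cu1 c₂ : ℝ, EdgeBoundsC h α γ cl cu cl1 cu1 c₂

/-- The random variable `W` has power-law tails with exponent `τ` under `P`. -/
def PowerLawTails {Ω : Type*} [MeasurableSpace Ω] (P : Measure Ω) (W : Ω → ℝ)
    (τ : ℝ) : Prop :=
  ∃ l : ℝ → ℝ, (∀ x : ℝ, 0 < x → 0 < l x) ∧ SlowlyVarying l ∧
    ∃ x₀ : ℝ, ∀ x : ℝ, x₀ ≤ x → (P {ω | x ≤ W ω}).toReal = l x * x ^ (-(τ - 1))

/-- The ratio `log F(t) / log t`, valued in `[0,∞]` (it equals `∞` when `F t = 0` and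
`0 < t < 1`, matching the convention `log 0 = -∞`). -/
def betaRatio (F : ℝ → ℝ) (t : ℝ) : ℝ≥0∞ :=
  (if F t = 0 then ⊤ else ENNReal.ofReal (-Real.log (F t))) / ENNReal.ofReal (-Real.log t)

/-- `β⁺ = limsup_{t↓0} log F(t)/log t ∈ [0,∞]`. -/
def betaPlus (F : ℝ → ℝ) : ℝ≥0∞ := limsup (betaRatio F) (nhdsWithin 0 (Set.Ioi 0))

/-- `β⁻ = liminf_{t↓0} log F(t)/log t ∈ [0,∞]`. -/
def betaMinus (F : ℝ → ℝ) : ℝ≥0∞ := liminf (betaRatio F) (nhdsWithin 0 (Set.Ioi 0))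

/-- All the data of generalised scale-free percolation on `ℤ^d`:
a probability space, prototype weight and length variables `W, L`, a connection
function `h`, i.i.d. vertex weights `Wt`, i.i.d. uniform variables `U` and
i.i.d. edge lengths `Len` indexed by unordered pairs of vertices. -/
structure Data (d : ℕ) (Ω : Type*) [MeasurableSpace Ω] where
  P : Measure Ω
  W : Ω → ℝ
  L : Ω → ℝ
  h : (Fin d → ℝ) → ℝ → ℝ → ℝ
  Wt : (Fin d → ℤ) → Ω → ℝ
  U : Sym2 (Fin d → ℤ) → Ω → ℝ
  Len : Sym2 (Fin d → ℤ) → Ω → ℝ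

/-- Index type for the combined family of basic random variables. -/
inductive Idx (d : ℕ) : Type
  | wt : (Fin d → ℤ) → Idx d
  | unif : Sym2 (Fin d → ℤ) → Idx d
  | len : Sym2 (Fin d → ℤ) → Idx d

variable {d : ℕ} {Ω : Type*} [MeasurableSpace Ω]

/-- The combined family of basic random variables. -/
def Data.family (M : Data d Ω) : Idx d → Ω → ℝ
  | .wt v => M.Wt v
  | .unif e => M.U e
  | .len e => M.Len e

/-- The model assumptions of generalised scale-free percolation: `P` is a probability
measure; `W ≥ 1` and `L ≥ 0`; `h` takes values in `[0,1]`; the weights are distributed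
as `W`, the pair variables are uniform on `[0,1]`, the edge lengths are distributed as
`L`, and all these random variables are mutually independent. -/
def Data.Valid (M : Data d Ω) : Prop :=
  IsProbabilityMeasure M.P ∧ Measurable M.W ∧ Measurable M.L ∧
    (∀ ω, 1 ≤ M.W ω) ∧ (∀ ω, 0 ≤ M.L ω) ∧
    (∀ x w₁ w₂, M.h x w₁ w₂ ∈ Set.Icc (0 : ℝ) 1) ∧
    (∀ i, Measurable (M.family i)) ∧
    (∀ v ω, 1 ≤ M.Wt v ω) ∧ (∀ e ω, 0 ≤ M.Len e ω) ∧
    (∀ v, Measure.map (M.Wt v) M.P = Measure.map M.W M.P) ∧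
    (∀ e : Sym2 (Fin d → ℤ), ¬e.IsDiag →
      Measure.map (M.U e) M.P = volume.restrict (Set.Icc (0 : ℝ) 1)) ∧
    (∀ e : Sym2 (Fin d → ℤ), ¬e.IsDiag →
      Measure.map (M.Len e) M.P = Measure.map M.L M.P) ∧
    iIndepFun M.family M.P

/-- Adjacency in the random graph at sample point `ω`: nearest-neighbour edges are
always present, and an edge between `u,v` with `‖u-v‖ > 1` is present iff the
attached uniform variable is at most `h (u-v) W_u W_v`. -/
def Data.Adj (M : Data d Ω) (ω : Ω) (u v : Fin d → ℤ) : Prop :=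
  znorm (u - v) = 1 ∨
    (1 < znorm (u - v) ∧
      M.U s(u, v) ω ≤ M.h (fun i => ((u - v) i : ℝ)) (M.Wt u ω) (M.Wt v ω))

/-- Cost of traversing the edge `{u,v}` from `u` to `v`, for penalty function `f`. -/
def Data.cost (M : Data d Ω) (f : ℝ → ℝ → ℝ) (ω : Ω) (u v : Fin d → ℤ) : ℝ :=
  M.Len s(u, v) ω * f (M.Wt u ω) (M.Wt v ω)

/-- `π` restricted to `{0,…,k}` is a self-avoiding path in the graph at `ω`. -/
def Data.IsPathSeg (M : Data d Ω) (ω : Ω) (k : ℕ) (π : ℕ → Fin d → ℤ) : Prop :=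
  (∀ i, i < k → M.Adj ω (π i) (π (i + 1))) ∧
    ∀ i j, i ≤ k → j ≤ k → π i = π j → i = j

/-- Total cost of the first `k` steps of `π`. -/
def Data.pathCost (M : Data d Ω) (f : ℝ → ℝ → ℝ) (ω : Ω) (k : ℕ)
    (π : ℕ → Fin d → ℤ) : ℝ≥0∞ :=
  ∑ i ∈ Finset.range k, ENNReal.ofReal (M.cost f ω (π i) (π (i + 1)))

/-- Cost-distance from `u` to `v`: the infimum of costs of paths from `u` to `v`. -/
def Data.costDist (M : Data d Ω) (f : ℝ → ℝ → ℝ) (ω : Ω) (u v : Fin d → ℤ) : ℝ≥0∞ :=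
  ⨅ (k : ℕ) (π : ℕ → Fin d → ℤ) (_ : π 0 = u) (_ : π k = v)
    (_ : M.IsPathSeg ω k π), M.pathCost f ω k π

/-- Explosion time `Y_f(v) = lim_{k→∞} inf { t : |B^{f,L}(v,t)| > k }`. -/
def Data.explosionTime (M : Data d Ω) (f : ℝ → ℝ → ℝ) (ω : Ω) (v : Fin d → ℤ) : ℝ≥0∞ :=
  ⨆ k : ℕ, sInf {t : ℝ≥0∞ |
    ∃ S : Finset (Fin d → ℤ), k < S.card ∧ ∀ u ∈ S, M.costDist f ω v u ≤ t}

/-- `π` is an infinite self-avoiding path starting at `v₀` in the graph at `ω`. -/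
def Data.InfPath (M : Data d Ω) (ω : Ω) (v₀ : Fin d → ℤ) (π : ℕ → Fin d → ℤ) : Prop :=
  π 0 = v₀ ∧ Function.Injective π ∧ ∀ i, M.Adj ω (π i) (π (i + 1))

/-- Total cost of an infinite path. -/
def Data.infPathCost (M : Data d Ω) (f : ℝ → ℝ → ℝ) (ω : Ω)
    (π : ℕ → Fin d → ℤ) : ℝ≥0∞ :=
  ∑' i, ENNReal.ofReal (M.cost f ω (π i) (π (i + 1)))

/-- The set of neighbours of `v` joined to `v` by an edge of cost at most `t`;
`N₁^t(v)` is its cardinality. -/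
def Data.cheapNbrs (M : Data d Ω) (f : ℝ → ℝ → ℝ) (ω : Ω) (v : Fin d → ℤ)
    (t : ℝ) : Set (Fin d → ℤ) :=
  {u | M.Adj ω v u ∧ M.cost f ω v u ≤ t}

/-- Cumulative distribution function `F_L` of the edge-length variable `L`. -/
def Data.cdf (M : Data d Ω) : ℝ → ℝ := fun t => (M.P {ω | M.L ω ≤ t}).toReal

/-- `f` is the polynomial penalty function with coefficients `a` and exponents
`μe, νe` over the finite index set `I`. -/
def IsPolyPenalty {ι : Type} (f : ℝ → ℝ → ℝ) (I : Finset ι) (a μe νe : ι → ℝ) : Prop :=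
  I.Nonempty ∧ (∀ i ∈ I, 0 < a i ∧ 0 ≤ μe i ∧ 0 ≤ νe i) ∧
    ∀ w₁ w₂ : ℝ, 1 ≤ w₁ → 1 ≤ w₂ → f w₁ w₂ = ∑ i ∈ I, a i * w₁ ^ μe i * w₂ ^ νe i

/-- `degf` is the degree `max_{i∈I} (μ_i + ν_i)` of the polynomial penalty. -/
def IsPolyDeg {ι : Type} (I : Finset ι) (μe νe : ι → ℝ) (degf : ℝ) : Prop :=
  (∀ i ∈ I, μe i + νe i ≤ degf) ∧ ∃ i ∈ I, μe i + νe i = degf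

end SFP

/-!
Fix a vertex `v` and a bound `m` on its weight. For `α ≤ 1` the lower connection bound gives
`h(x, w₁, w₂) ≥ κ ‖x‖^{-d}` as long as both weights lie in `[1, m]`, so comparing `U_{v,u}` with
the deterministic threshold `κ ‖u - v‖^{-d}` yields, for `W_v ≤ m`, neighbours `u` of `v` with
`W_u ∈ [c, e]`. These events depend on disjoint sets of independent variables and have
probabilities `κ ‖u - v‖^{-d} P(W ∈ [c, e])`, whose sum diverges because `∑_{x ∈ ℤ^d ∖ 0} ‖x‖^{-d}`
does; the second Borel–Cantelli lemma and a countable union over `v` and `m` conclude.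
-/

lemma tsum_ofReal_div_natCast_add_one_eq_top {C : ℝ} (hC : 0 < C) :
    ∑' n : ℕ, ENNReal.ofReal (C / (n + 1)) = ∞ := by
  by_contra h
  have hs := ENNReal.summable_toReal h
  simp only [ENNReal.toReal_ofReal (div_nonneg hC.le (Nat.cast_add_one_pos _).le)] at hs
  refine Real.not_summable_one_div_natCast ((summable_nat_add_iff 1).1 ?_)
  simpa [div_eq_mul_inv, summable_mul_left_iff hC.ne'] using hs

namespace ProbabilityTheory

variable {Ω ι κ β : Type*} [MeasurableSpace Ω] [MeasurableSpace β] {μ : Measure Ω}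

lemma iIndepFun.iIndepSet_inter_preimage {f : ι → Ω → β} (hf : ∀ i, Measurable (f i))
    (hind : iIndepFun f μ) {i j : κ → ι} (hi : i.Injective) (hj : j.Injective)
    (hij : ∀ k l, i k ≠ j l) {A B : κ → Set β} (hA : ∀ k, MeasurableSet (A k))
    (hB : ∀ k, MeasurableSet (B k)) :
    iIndepSet (fun k => f (i k) ⁻¹' A k ∩ f (j k) ⁻¹' B k) μ := by
  rw [iIndepSet_iff_meas_biInter fun k => (hf _ (hA k)).inter (hf _ (hB k))]
  intro S
  have hinter : ⋂ k ∈ S, (f (i k) ⁻¹' A k ∩ f (j k) ⁻¹' B k) =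
      ⋂ s ∈ S.disjSum S, f (Sum.elim i j s) ⁻¹' Sum.elim A B s := by
    ext ω
    simp [Finset.mem_disjSum, forall_and]
  rw [hinter, (hind.precomp (hi.sumElim hj hij)).measure_inter_preimage_eq_mul _
    (by rintro (k | k) _ <;> simp [hA, hB]), Finset.prod_disjSum, ← Finset.prod_mul_distrib]
  refine Finset.prod_congr rfl fun k _ => ?_
  exact ((hind.indepFun (hij k k)).measure_inter_preimage_eq_mul _ _ (hA k) (hB k)).symm

lemma ae_infinite_setOf_mem_of_iIndepSet [IsProbabilityMeasure μ] [Countable ι]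
    {E : ι → Set Ω} (hE : ∀ i, MeasurableSet (E i)) (hind : iIndepSet E μ)
    (hsum : ∑' i, μ (E i) = ∞) : ∀ᵐ ω ∂μ, {i | ω ∈ E i}.Infinite := by
  have : Infinite ι := by
    refine (finite_or_infinite ι).resolve_left fun _ => ?_
    have := Fintype.ofFinite ι
    rw [tsum_fintype] at hsum
    exact ENNReal.sum_ne_top.2 (fun i _ => measure_ne_top μ (E i)) hsum
  obtain ⟨e⟩ := nonempty_equiv_of_countable (α := ℕ) (β := ι)
  have hlimsup : μ (limsup (fun n => E (e n)) atTop) = 1 :=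
    measure_limsup_eq_one (fun n => hE _) (hind.precomp e.injective)
      (by rwa [e.tsum_eq fun i => μ (E i)])
  have hmeas := MeasurableSet.measurableSet_limsup fun n => hE (e n)
  filter_upwards [ae_iff.2 ((prob_compl_eq_zero_iff hmeas).2 hlimsup)] with ω hω
  rw [mem_limsup_iff_frequently_mem, Nat.frequently_atTop_iff_infinite] at hω
  exact (hω.image e.injective.injOn).mono (by rintro _ ⟨n, hn, rfl⟩; exact hn)

lemma measure_preimage_Iic_of_map_eq_uniform {U : Ω → ℝ} (hU : Measurable U)
    (hmap : μ.map U = volume.restrict (Icc 0 1)) {t : ℝ} (ht : t ≤ 1) :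
    μ (U ⁻¹' Iic t) = ENNReal.ofReal t := by
  rw [← Measure.map_apply hU measurableSet_Iic, hmap, Measure.restrict_apply measurableSet_Iic,
    ← Ici_inter_Iic, inter_comm, inter_assoc, Iic_inter_Iic, min_eq_right ht, Ici_inter_Iic,
    Real.volume_Icc, sub_zero]

end ProbabilityTheory

namespace SFP

variable {d : ℕ}

lemma abs_le_znorm (x : Fin d → ℤ) (i : Fin d) : |(x i : ℝ)| ≤ znorm x := by
  rw [← Real.sqrt_sq_eq_abs]
  exact Real.sqrt_le_sqrt
    (Finset.single_le_sum (f := fun i => (x i : ℝ) ^ 2) (fun i _ => sq_nonneg _)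
      (Finset.mem_univ i))

lemma znorm_nonneg (x : Fin d → ℤ) : 0 ≤ znorm x := Real.sqrt_nonneg _

lemma one_le_znorm {x : Fin d → ℤ} (hx : x ≠ 0) : 1 ≤ znorm x := by
  obtain ⟨i, hi⟩ := Function.ne_iff.1 hx
  exact le_trans (by exact_mod_cast Int.one_le_abs hi : (1 : ℝ) ≤ |(x i : ℝ)|) (abs_le_znorm x i)

lemma znorm_le_sqrt_mul {x : Fin d → ℤ} {r : ℝ} (hr : 0 ≤ r) (hx : ∀ i, |(x i : ℝ)| ≤ r) :
    znorm x ≤ √d * r := by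
  rw [← Real.sqrt_sq hr, ← Real.sqrt_mul (Nat.cast_nonneg d)]
  refine Real.sqrt_le_sqrt ?_
  calc ∑ i, (x i : ℝ) ^ 2 ≤ ∑ _i : Fin d, r ^ 2 :=
        Finset.sum_le_sum fun i _ => sq_le_sq' (abs_le.1 (hx i)).1 (abs_le.1 (hx i)).2
    _ = d * r ^ 2 := by simp

lemma znorm_cons_le (n : ℕ) (y : Fin d → Fin (n + 1)) :
    znorm (Fin.cons ((n : ℤ) + 1) fun i => (y i : ℤ) : Fin (d + 1) → ℤ) ≤
      √(d + 1 : ℕ) * (n + 1) := by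
  refine znorm_le_sqrt_mul (by positivity) (Fin.cases ?_ fun i => ?_)
  · simp only [Fin.cons_zero]
    push_cast
    rw [abs_of_nonneg (by positivity)]
  · simp only [Fin.cons_succ, Int.cast_natCast, Nat.abs_cast]
    exact_mod_cast (y i).is_le.trans n.le_succ

/-- Counting the points with first coordinate `n + 1` and all others in `[0, n]` reduces the
divergence to that of the harmonic series. -/
lemma tsum_ofReal_inv_znorm_pow_eq_top (hd : 1 ≤ d) :
    ∑' x : {x : Fin d → ℤ // x ≠ 0}, ENNReal.ofReal (znorm x.1 ^ d)⁻¹ = ∞ := by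
  obtain ⟨d, rfl⟩ := Nat.exists_eq_add_of_le' hd
  let φ : (Σ n : ℕ, Fin d → Fin (n + 1)) → {x : Fin (d + 1) → ℤ // x ≠ 0} := fun p =>
    ⟨Fin.cons ((p.1 : ℤ) + 1) fun i => (p.2 i : ℤ), fun h =>
      (Int.natCast_nonneg p.1).trans_lt (lt_add_one _) |>.ne' (congrFun h 0)⟩
  have hφ : φ.Injective := by
    rintro ⟨n, y⟩ ⟨n', y'⟩ h
    obtain ⟨hn, hy⟩ := Fin.cons_inj (α := fun _ => ℤ).1 (congrArg Subtype.val h)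
    obtain rfl : n = n' := by simpa using hn
    obtain rfl : y = y' := funext fun i => Fin.ext (by exact_mod_cast congrFun hy i)
    rfl
  let g : {x : Fin (d + 1) → ℤ // x ≠ 0} → ℝ≥0∞ := fun x => ENNReal.ofReal (znorm x.1 ^ (d + 1))⁻¹
  set C : ℝ := (√(d + 1 : ℕ) ^ (d + 1))⁻¹
  have hblock (n : ℕ) : ENNReal.ofReal (C / (n + 1)) ≤ ∑' y, g (φ ⟨n, y⟩) := by
    calc ENNReal.ofReal (C / (n + 1))
        = ∑' _ : Fin d → Fin (n + 1), ENNReal.ofReal ((√(d + 1 : ℕ) * (n + 1)) ^ (d + 1))⁻¹ := by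
          rw [tsum_fintype, Finset.sum_const, Finset.card_univ, nsmul_eq_mul,
            ← ENNReal.ofReal_natCast, ← ENNReal.ofReal_mul (Nat.cast_nonneg _)]
          congr 1
          simp only [Fintype.card_fun, Fintype.card_fin, C]
          push_cast
          rw [mul_pow, pow_succ ((n : ℝ) + 1)]
          field_simp
      _ ≤ _ := ENNReal.tsum_le_tsum fun y => ENNReal.ofReal_le_ofReal <|
          inv_anti₀ (pow_pos (one_le_znorm (φ ⟨n, y⟩).2 |>.trans_lt' one_pos) _)
            (pow_le_pow_left₀ (znorm_nonneg _) (znorm_cons_le n y) _)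
  refine top_le_iff.1 ?_
  calc ∞ = ∑' n : ℕ, ENNReal.ofReal (C / (n + 1)) :=
        (tsum_ofReal_div_natCast_add_one_eq_top (by positivity)).symm
    _ ≤ ∑' n, ∑' y, g (φ ⟨n, y⟩) := ENNReal.tsum_le_tsum hblock
    _ = ∑' p, g (φ p) := (ENNReal.tsum_sigma' fun p => g (φ p)).symm
    _ ≤ ∑' x, g x := ENNReal.tsum_comp_le_tsum_of_injective hφ g

lemma lfun_pos (c₂ γ w : ℝ) : 0 < lfun c₂ γ w := Real.exp_pos _

lemma lfun_le_one {c₂ γ w : ℝ} (hc₂ : 0 ≤ c₂) (hw : 1 ≤ w) : lfun c₂ γ w ≤ 1 :=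
  Real.exp_le_one_iff.2 <|
    mul_nonpos_of_nonpos_of_nonneg (neg_nonpos.2 hc₂) (Real.rpow_nonneg (Real.log_nonneg hw) γ)

lemma lfun_le_lfun {c₂ γ w w' : ℝ} (hc₂ : 0 ≤ c₂) (hγ : 0 ≤ γ) (hw : 1 ≤ w) (hww' : w ≤ w') :
    lfun c₂ γ w' ≤ lfun c₂ γ w :=
  Real.exp_le_exp.2 <| mul_le_mul_of_nonpos_left
    (Real.rpow_le_rpow (Real.log_nonneg hw) (Real.log_le_log (by linarith) hww') hγ)
    (neg_nonpos.2 hc₂)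

lemma EdgeBounds.exists_mul_inv_znorm_pow_le {h : (Fin d → ℝ) → ℝ → ℝ → ℝ} {α : ℝ≥0∞}
    (hEB : EdgeBounds h α) (hα : α ≤ 1) (m : ℝ) :
    ∃ κ > 0, ∀ x : Fin d → ℤ, x ≠ 0 → ∀ w₁ w₂ : ℝ, 1 ≤ w₁ → w₁ ≤ m → 1 ≤ w₂ → w₂ ≤ m →
      κ * (znorm x ^ d)⁻¹ ≤ h (fun i => (x i : ℝ)) w₁ w₂ := by
  obtain ⟨γ, cl, _, _, _, c₂, hγ, hcl, -, -, -, hc₂, ⟨-, hbound⟩ | ⟨rfl, -⟩⟩ := hEB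
  swap
  · simp at hα
  set K := lfun c₂ γ m * lfun c₂ γ m
  have hK0 : 0 < K := mul_pos (lfun_pos _ _ _) (lfun_pos _ _ _)
  refine ⟨cl * K, mul_pos hcl hK0, fun x hx w₁ w₂ hw₁ hw₁m hw₂ hw₂m => ?_⟩
  have hxR : (fun i => (x i : ℝ)) ≠ 0 := fun h0 =>
    hx (funext fun i => by simpa using congrFun h0 i)
  have hs0 : 0 < (znorm x ^ d)⁻¹ := by have := one_le_znorm hx; positivity
  have hs1 : (znorm x ^ d)⁻¹ ≤ 1 := inv_le_one_of_one_le₀ (one_le_pow₀ (one_le_znorm hx))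
  have hK1 : K ≤ 1 := mul_le_one₀ (lfun_le_one hc₂.le (hw₁.trans hw₁m)) (lfun_pos _ _ _).le
    (lfun_le_one hc₂.le (hw₁.trans hw₁m))
  have hKw : K ≤ lfun c₂ γ w₁ * lfun c₂ γ w₂ :=
    mul_le_mul (lfun_le_lfun hc₂.le hγ.1.le hw₁ hw₁m) (lfun_le_lfun hc₂.le hγ.1.le hw₂ hw₂m)
      (lfun_pos _ _ _).le (lfun_pos _ _ _).le
  have ha1 : α.toReal ≤ 1 := by simpa using ENNReal.toReal_mono ENNReal.one_ne_top hα
  refine le_trans ?_ (hbound _ hxR w₁ w₂ hw₁ hw₂).1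
  rw [mul_assoc]
  refine mul_le_mul_of_nonneg_left (le_min ?_ ?_) hcl.le
  · exact (mul_le_of_le_one_right hK0.le hs1).trans hKw
  · calc K * (znorm x ^ d)⁻¹ ≤ (znorm x ^ d)⁻¹ := mul_le_of_le_one_left hs0.le hK1
      _ ≤ ((znorm x ^ d)⁻¹) ^ α.toReal := by
          simpa using Real.rpow_le_rpow_of_exponent_ge hs0 hs1 ha1
      _ ≤ (w₁ * w₂ / rnorm (fun i => (x i : ℝ)) ^ d) ^ α.toReal := by
          refine Real.rpow_le_rpow hs0.le ?_ ENNReal.toReal_nonneg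
          rw [div_eq_mul_inv]
          exact le_mul_of_one_le_left hs0.le (one_le_mul_of_one_le_of_one_le hw₁ hw₂)

lemma tsum_ofReal_mul_inv_znorm_sub_pow_eq_top (hd : 1 ≤ d) (v : Fin d → ℤ) {κ : ℝ}
    (hκ : 0 < κ) : ∑' u : {u // u ≠ v}, ENNReal.ofReal (κ * (znorm (v - u.1) ^ d)⁻¹) = ∞ := by
  let e : {u // u ≠ v} ≃ {x : Fin d → ℤ // x ≠ 0} :=
    (Equiv.subLeft v).subtypeEquiv fun u => by simp [sub_eq_zero, eq_comm]
  simp_rw [ENNReal.ofReal_mul hκ.le]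
  have hsum : ∑' u : {u // u ≠ v}, ENNReal.ofReal (znorm (v - u.1) ^ d)⁻¹ = ∞ :=
    (e.tsum_eq fun x => ENNReal.ofReal (znorm x.1 ^ d)⁻¹).trans
      (tsum_ofReal_inv_znorm_pow_eq_top hd)
  rw [ENNReal.tsum_mul_left, hsum, ENNReal.mul_top (ENNReal.ofReal_pos.2 hκ).ne']

end SFP

namespace SFP.Data

variable {d : ℕ} {Ω : Type*} [MeasurableSpace Ω] {M : Data d Ω}

lemma Valid.h_le_one (hM : M.Valid) (x : Fin d → ℝ) (w₁ w₂ : ℝ) : M.h x w₁ w₂ ≤ 1 := by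
  obtain ⟨-, -, -, -, -, hh, -⟩ := hM
  exact (hh x w₁ w₂).2

lemma Valid.one_le_Wt (hM : M.Valid) (v : Fin d → ℤ) (ω : Ω) : 1 ≤ M.Wt v ω := by
  obtain ⟨-, -, -, -, -, -, -, hWt, -⟩ := hM
  exact hWt v ω

lemma adj_of_U_le {ω : Ω} {u v : Fin d → ℤ} (huv : u ≠ v)
    (hU : M.U s(u, v) ω ≤ M.h (fun i => ((u - v) i : ℝ)) (M.Wt u ω) (M.Wt v ω)) :
    M.Adj ω u v :=
  (one_le_znorm (sub_ne_zero.2 huv)).eq_or_lt.imp Eq.symm fun h1 => ⟨h1, hU⟩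

lemma Valid.ae_infinite_setOf_U_le_and_Wt_mem (hM : M.Valid) (v : Fin d → ℤ)
    {τ : (Fin d → ℤ) → ℝ} (hτ : ∀ u, u ≠ v → τ u ≤ 1)
    (hsum : ∑' u : {u // u ≠ v}, ENNReal.ofReal (τ u) = ∞) {S : Set ℝ} (hS : MeasurableSet S)
    (hWS : 0 < M.P (M.W ⁻¹' S)) :
    ∀ᵐ ω ∂M.P, {u | u ≠ v ∧ M.U s(v, u) ω ≤ τ u ∧ M.Wt u ω ∈ S}.Infinite := by
  obtain ⟨hP, hW, -, -, -, -, hfam, -, -, hWt, hU, -, hind⟩ := hM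
  let i : {u // u ≠ v} → Idx d := fun u => .unif s(v, u.1)
  let j : {u // u ≠ v} → Idx d := fun u => .wt u.1
  have hi : i.Injective := fun u u' h => Subtype.ext (Sym2.congr_right.1 (Idx.unif.inj h))
  have hj : j.Injective := fun u u' h => Subtype.ext (Idx.wt.inj h)
  have hij : ∀ u u', i u ≠ j u' := fun _ _ => by simp [i, j]
  let E : {u // u ≠ v} → Set Ω := fun u => M.U s(v, u.1) ⁻¹' Iic (τ u) ∩ M.Wt u ⁻¹' S
  have hE : ∀ u, M.P (E u) = ENNReal.ofReal (τ u) * M.P (M.W ⁻¹' S) := by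
    intro u
    have hdiag : ¬ s(v, u.1).IsDiag := by simpa [Sym2.mk_isDiag_iff] using u.2.symm
    rw [show M.P (E u) = _ from (hind.indepFun (hij u u)).measure_inter_preimage_eq_mul _ _
        measurableSet_Iic hS,
      show M.P (M.family (i u) ⁻¹' Iic (τ u)) = _ from
        measure_preimage_Iic_of_map_eq_uniform (hfam (i u)) (hU _ hdiag) (hτ u u.2),
      ← Measure.map_apply (hfam (j u)) hS, show M.family (j u) = M.Wt u from rfl, hWt u,
      Measure.map_apply hW hS]
  have hsumE : ∑' u, M.P (E u) = ∞ := by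
    simp_rw [hE]
    rw [ENNReal.tsum_mul_right, hsum, ENNReal.top_mul hWS.ne']
  filter_upwards [ae_infinite_setOf_mem_of_iIndepSet
    (fun u => (hfam (i u) measurableSet_Iic).inter (hfam (j u) hS))
    (hind.iIndepSet_inter_preimage hfam hi hj hij (fun _ => measurableSet_Iic) fun _ => hS)
    hsumE] with ω hω
  refine (hω.image Subtype.val_injective.injOn).mono ?_
  rintro _ ⟨u, hu, rfl⟩
  exact ⟨u.2, hu⟩

end SFP.Data

theorem sfp_infinitely_many_neighbours_general
    {d : ℕ} (hd : 1 ≤ d) {Ω : Type*} [MeasurableSpace Ω] (M : SFP.Data d Ω)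
    (hM : M.Valid)
    (α : ℝ≥0∞) (hα1 : α ≤ 1) (hEB : SFP.EdgeBounds M.h α)
    (c e : ℝ) (hce : 0 < M.P {ω | M.W ω ∈ Set.Icc c e}) :
    M.P {ω | ∀ v : Fin d → ℤ,
        {u | M.Adj ω v u ∧ M.Wt u ω ∈ Set.Icc c e}.Infinite} = 1 := by
  have : IsProbabilityMeasure M.P := hM.1
  let B (n : ℕ) : ℝ := n + max e 1
  have hB (n : ℕ) : 1 ≤ B n := le_add_of_nonneg_of_le n.cast_nonneg (le_max_right e 1)
  choose κ hκ hκh using fun n => hEB.exists_mul_inv_znorm_pow_le hα1 (B n)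
  let τ (n : ℕ) (v u : Fin d → ℤ) : ℝ := κ n * (SFP.znorm (v - u) ^ d)⁻¹
  have hτ1 (n : ℕ) (v u : Fin d → ℤ) (huv : u ≠ v) : τ n v u ≤ 1 :=
    (hκh n _ (sub_ne_zero.2 huv.symm) 1 1 le_rfl (hB n) le_rfl (hB n)).trans (hM.h_le_one _ _ _)
  have key (v : Fin d → ℤ) (n : ℕ) : ∀ᵐ ω ∂M.P,
      {u | u ≠ v ∧ M.U s(v, u) ω ≤ τ n v u ∧ M.Wt u ω ∈ Icc c e}.Infinite :=
    hM.ae_infinite_setOf_U_le_and_Wt_mem v (hτ1 n v)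
      (SFP.tsum_ofReal_mul_inv_znorm_sub_pow_eq_top hd v (hκ n)) measurableSet_Icc hce
  have hae : ∀ᵐ ω ∂M.P, ∀ v, {u | M.Adj ω v u ∧ M.Wt u ω ∈ Icc c e}.Infinite := by
    filter_upwards [ae_all_iff.2 fun v => ae_all_iff.2 (key v)] with ω hω v
    obtain ⟨n, hn⟩ := exists_nat_ge (M.Wt v ω)
    refine (hω v n).mono ?_
    rintro u ⟨huv, hU, hW⟩
    refine ⟨SFP.Data.adj_of_U_le huv.symm (hU.trans ?_), hW⟩
    refine hκh n _ (sub_ne_zero.2 huv.symm) _ _ (hM.one_le_Wt v ω) ?_ (hM.one_le_Wt u ω) ?_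
    · exact hn.trans (le_add_of_nonneg_right (zero_le_one.trans (le_max_right e 1)))
    · exact hW.2.trans ((le_max_left e 1).trans (le_add_of_nonneg_left n.cast_nonneg))
  exact (measure_congr (ae_eq_univ.2 (ae_iff.1 hae))).trans measure_univ

/-- For SFP on `ℤ^d` with weight distribution `W ≥ 1` and long-range
parameter `α ∈ (0,1]`: if `[c,e]` is an interval with `P(W ∈ [c,e]) > 0`, then almost
surely every vertex of `ℤ^d` has infinitely many neighbours whose weight lies in
`[c,e]`. -/
theorem sfp_infinitely_many_neighbours
    {d : ℕ} (hd : 1 ≤ d) {Ω : Type*} [MeasurableSpace Ω] (M : SFP.Data d Ω)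
    (hM : M.Valid)
    (α : ℝ≥0∞) (hα0 : 0 < α) (hα1 : α ≤ 1) (hEB : SFP.EdgeBounds M.h α)
    (c e : ℝ) (hce : 0 < M.P {ω | M.W ω ∈ Set.Icc c e}) :
    M.P {ω | ∀ v : Fin d → ℤ,
        {u | M.Adj ω v u ∧ M.Wt u ω ∈ Set.Icc c e}.Infinite} = 1 :=
  sfp_infinitely_many_neighbours_general hd M hM α hα1 hEB c e hce
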